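/- Let X be a Banach space and (X_k)_{k≥1} a representing system of subspaces of X. Then there exists ε > 0 such that for every sequential partition π = {I_k} of ℕ into consecutive intervals, and every continuous linear functional φ ∈ X*, one has Σ_k ‖φ restricted to the closed linear span of {X_i : i ∈ I_k}‖ ≥ ε‖φ‖. -/

import Mathlib

/-!
Pairs `(x, g)`, where `g` is the sequence of partial sums of a series with terms in the `X k`
converging to `x`, form a closed subspace of `E × (ℕ →ᵇ E)` which the projection `(x, g) ↦ x`
maps onto `E`. By the open mapping theorem every `x` therefore has such a representation with
partial sums bounded by `C ‖x‖`. Regrouping it along a partition, the part of the `n`-th partial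
sum lying in the block `I_k` is a difference of two partial sums, so it has norm at most
`2 C ‖x‖` and `φ` takes on it a value of size at most `2 C ‖x‖ ‖φ^(S, I_k)‖`. Summing over the
blocks and letting `n → ∞` gives `‖φ‖ ≤ 2 C Σ_k ‖φ^(S, I_k)‖`, so `ε = 1 / (2 C)` works.
-/

open Filter Finset

/-- `S = (X_k)` is a representing system of subspaces. -/
def IsRSS {E : Type*} [NormedAddCommGroup E] [NormedSpace ℝ E]
    (X : ℕ → Submodule ℝ E) : Prop :=
  ∀ x : E, ∃ f : ℕ → E, (∀ k, f k ∈ X k) ∧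
    Tendsto (fun n => ∑ k ∈ Finset.range n, f k) atTop (nhds x)

/-- `c : ℕ → ℕ` encodes a sequential partition of `ℕ` into consecutive intervals:
`c i` is the index of the block containing `i`.  The blocks are `{i | c i = k}`.
This encodes both partitions into infinitely many finite consecutive intervals and
partitions into finitely many intervals, the last one infinite. -/
def IsSequentialPartition (c : ℕ → ℕ) : Prop :=
  Monotone c ∧ c 0 = 0 ∧ ∀ i, c (i + 1) ≤ c i + 1

/-- Restriction of a functional `φ` to the closed linear span of the subspaces `X_i`,
`i` in the `k`-th block of the partition `c`. -/
noncomputable def restrictedNorm {E : Type*} [NormedAddCommGroup E] [NormedSpace ℝ E]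
    (X : ℕ → Submodule ℝ E) (c : ℕ → ℕ) (k : ℕ) (φ : E →L[ℝ] ℝ) : ℝ :=
  ‖φ.comp (Submodule.subtypeL ((⨆ i ∈ {i | c i = k}, X i).topologicalClosure))‖

open Topology BoundedContinuousFunction

theorem Finset.filter_range_eq_range_count {p : ℕ → Prop} [DecidablePred p] (hp : Antitone p)
    (n : ℕ) : {i ∈ range n | p i} = range (Nat.count p n) := by
  induction n with
  | zero => simp
  | succ n ih =>
    by_cases hn : p n
    · have h : {i ∈ range (n + 1) | p i} = range (n + 1) :=
        filter_true_of_mem fun i hi => hp (mem_range_succ_iff.1 hi) hn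
      rw [Nat.count_eq_card_filter_range, h, card_range]
    · rw [range_add_one, filter_insert, if_neg hn, ih, Nat.count_succ, if_neg hn, add_zero]

theorem Monotone.exists_sum_filter_eq_sub {M : Type*} [AddCommGroup M] {c : ℕ → ℕ}
    (hc : Monotone c) (f : ℕ → M) (n k : ℕ) :
    ∃ a b, ∑ i ∈ range n with c i = k, f i = ∑ i ∈ range b, f i - ∑ i ∈ range a, f i := by
  have hlt : ∀ m, Antitone fun i => c i < m := fun m i j hij h => (hc hij).trans_lt h
  -- `{i ∈ range n | c i < m}` is an initial segment of `range n`.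
  refine ⟨Nat.count (c · < k) n, Nat.count (c · < k + 1) n, ?_⟩
  rw [← filter_range_eq_range_count (hlt _), ← filter_range_eq_range_count (hlt _),
    eq_sub_iff_add_eq, ← sum_union]
  · congr 1
    ext i
    simp only [mem_union, mem_filter, mem_range, Order.lt_add_one_iff]
    omega
  · simp only [disjoint_filter, mem_range, not_lt]
    omega

section RepresentingSystem

variable {E : Type*} [NormedAddCommGroup E] [NormedSpace ℝ E] {X : ℕ → Submodule ℝ E}

def representationSpace (X : ℕ → Submodule ℝ E) : Submodule ℝ (E × (ℕ →ᵇ E)) where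
  carrier := {p | p.2 0 = 0 ∧ (∀ k, p.2 (k + 1) - p.2 k ∈ X k) ∧ Tendsto p.2 atTop (𝓝 p.1)}
  zero_mem' := ⟨rfl, fun k => by simp, tendsto_const_nhds⟩
  add_mem' := by
    rintro p q ⟨hp0, hpX, hp⟩ ⟨hq0, hqX, hq⟩
    refine ⟨by simp [hp0, hq0], fun k => ?_, hp.add hq⟩
    simpa [add_sub_add_comm] using (X k).add_mem (hpX k) (hqX k)
  smul_mem' := by
    rintro a p ⟨hp0, hpX, hp⟩
    refine ⟨by simp [hp0], fun k => ?_, hp.const_smul a⟩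
    simpa [smul_sub] using (X k).smul_mem a (hpX k)

theorem isClosed_representationSpace (hX : ∀ k, IsClosed (X k : Set E)) :
    IsClosed (representationSpace X : Set (E × (ℕ →ᵇ E))) := by
  have heval (n : ℕ) : LipschitzWith 1 fun p : E × (ℕ →ᵇ E) => p.2 n :=
    LipschitzWith.mk_one fun p q =>
      (dist_coe_le_dist (f := p.2) (g := q.2) n).trans (le_max_right _ _)
  have htendsto : IsClosed {p : E × (ℕ →ᵇ E) | Tendsto (fun n => p.2 n) atTop (𝓝 p.1)} :=
    (LipschitzWith.uniformEquicontinuous _ 1 heval).equicontinuous.isClosed_setOfPred_tendsto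
      continuous_fst
  have hincr : IsClosed {p : E × (ℕ →ᵇ E) | ∀ k, p.2 (k + 1) - p.2 k ∈ X k} := by
    simp only [Set.ofPred_forall]
    exact isClosed_iInter fun k =>
      (hX k).preimage ((heval (k + 1)).continuous.sub (heval k).continuous)
  exact (isClosed_singleton.preimage (heval 0).continuous).inter (hincr.inter htendsto)

def HasBoundedRepresentations (X : ℕ → Submodule ℝ E) (C : ℝ) : Prop :=
  ∀ x : E, ∃ f : ℕ → E, (∀ k, f k ∈ X k) ∧
    Tendsto (fun n => ∑ k ∈ range n, f k) atTop (𝓝 x) ∧ ∀ n, ‖∑ k ∈ range n, f k‖ ≤ C * ‖x‖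

theorem IsRSS.exists_hasBoundedRepresentations [CompleteSpace E]
    (hX : ∀ k, IsClosed (X k : Set E)) (hS : IsRSS X) :
    ∃ C > 0, HasBoundedRepresentations X C := by
  have : CompleteSpace (representationSpace X) :=
    (isClosed_representationSpace hX).completeSpace_coe
  let T : representationSpace X →L[ℝ] E :=
    (ContinuousLinearMap.fst ℝ E (ℕ →ᵇ E)).comp (representationSpace X).subtypeL
  have hT : Function.Surjective T := by
    intro x
    obtain ⟨f, hf, hfx⟩ := hS x
    obtain ⟨R, hR⟩ := Metric.isBounded_range_iff.1 (Metric.isBounded_range_of_tendsto _ hfx)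
    let g := mkOfDiscrete (fun n => ∑ k ∈ range n, f k) R hR
    exact ⟨⟨(x, g), by simp [g], fun k => by simpa [g, sum_range_succ] using hf k, hfx⟩, rfl⟩
  obtain ⟨C, hC, hCT⟩ := T.exists_preimage_norm_le hT
  refine ⟨C, hC, fun x => ?_⟩
  obtain ⟨⟨⟨y, g⟩, hg0, hgX, hgy⟩, rfl, hnorm⟩ := hCT x
  have hsum (n : ℕ) : ∑ k ∈ range n, (g (k + 1) - g k) = g n := by
    rw [sum_range_sub, hg0, sub_zero]
  refine ⟨fun k => g (k + 1) - g k, hgX, by simpa [hsum, T] using hgy, fun n => ?_⟩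
  rw [hsum]
  exact (g.norm_coe_le_norm n).trans ((norm_snd_le _).trans hnorm)

theorem restrictedNorm_nonneg (c : ℕ → ℕ) (k : ℕ) (φ : E →L[ℝ] ℝ) :
    0 ≤ restrictedNorm X c k φ := by
  unfold restrictedNorm
  positivity

theorem abs_apply_le_restrictedNorm_mul {c : ℕ → ℕ} {k : ℕ} (φ : E →L[ℝ] ℝ) {v : E}
    (hv : v ∈ ⨆ i ∈ {i | c i = k}, X i) : |φ v| ≤ restrictedNorm X c k φ * ‖v‖ :=
  (φ.comp (Submodule.subtypeL _)).le_opNorm ⟨v, Submodule.le_topologicalClosure _ hv⟩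

theorem abs_apply_sum_le_of_monotone {c : ℕ → ℕ} (hc : Monotone c) (φ : E →L[ℝ] ℝ)
    (hr : Summable fun k => restrictedNorm X c k φ) {f : ℕ → E} (hf : ∀ k, f k ∈ X k) {M : ℝ}
    (hM : ∀ n, ‖∑ k ∈ range n, f k‖ ≤ M) (n : ℕ) :
    |φ (∑ k ∈ range n, f k)| ≤ 2 * M * ∑' k, restrictedNorm X c k φ := by
  set blocks := (range n).image c
  have hM0 : 0 ≤ M := by simpa using hM 0
  have hblock (k : ℕ) :
      |φ (∑ i ∈ range n with c i = k, f i)| ≤ restrictedNorm X c k φ * (2 * M) := by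
    have hmem : ∑ i ∈ range n with c i = k, f i ∈ ⨆ i ∈ {i | c i = k}, X i :=
      Submodule.sum_mem _ fun i hi =>
        Submodule.mem_iSup_of_mem i (Submodule.mem_iSup_of_mem (mem_filter.1 hi).2 (hf i))
    obtain ⟨a, b, hab⟩ := hc.exists_sum_filter_eq_sub f n k
    refine (abs_apply_le_restrictedNorm_mul φ hmem).trans
      (mul_le_mul_of_nonneg_left ?_ (restrictedNorm_nonneg c k φ))
    rw [hab, two_mul]
    exact (norm_sub_le _ _).trans (add_le_add (hM b) (hM a))
  calc |φ (∑ k ∈ range n, f k)|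
      = |∑ k ∈ blocks, φ (∑ i ∈ range n with c i = k, f i)| := by
        rw [← sum_fiberwise_of_maps_to (fun i hi => mem_image_of_mem c hi), map_sum]
    _ ≤ ∑ k ∈ blocks, restrictedNorm X c k φ * (2 * M) :=
        (abs_sum_le_sum_abs _ _).trans (sum_le_sum fun k _ => hblock k)
    _ ≤ (∑' k, restrictedNorm X c k φ) * (2 * M) := by
        rw [← sum_mul]
        exact mul_le_mul_of_nonneg_right (hr.sum_le_tsum _ fun k _ => restrictedNorm_nonneg c k φ)
          (by positivity)
    _ = 2 * M * ∑' k, restrictedNorm X c k φ := mul_comm _ _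

theorem HasBoundedRepresentations.opNorm_le {C : ℝ} (hXC : HasBoundedRepresentations X C)
    (hC : 0 ≤ C) {c : ℕ → ℕ} (hc : Monotone c) (φ : E →L[ℝ] ℝ)
    (hr : Summable fun k => restrictedNorm X c k φ) :
    ‖φ‖ ≤ 2 * C * ∑' k, restrictedNorm X c k φ := by
  have hr0 : 0 ≤ ∑' k, restrictedNorm X c k φ := tsum_nonneg (restrictedNorm_nonneg c · φ)
  refine φ.opNorm_le_bound (by positivity) fun x => ?_
  obtain ⟨f, hf, hfx, hbound⟩ := hXC x
  rw [Real.norm_eq_abs]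
  refine le_of_tendsto ((φ.continuous.tendsto x).comp hfx).abs (Eventually.of_forall fun n => ?_)
  exact (abs_apply_sum_le_of_monotone hc φ hr hf hbound n).trans_eq (by ring)

end RepresentingSystem

/-- If `(X_k)` is a representing system of subspaces, then there is `ε > 0` such that for
every sequential partition `π = {I_k}` of `ℕ` and every `φ ∈ X*`,
`Σ_k ‖φ^(S, I_k)‖ ≥ ε ‖φ‖` (the sum taken in `[0, ∞]`). -/
theorem rss_sequential_partition_inequality {E : Type*} [NormedAddCommGroup E]
    [NormedSpace ℝ E] [CompleteSpace E] (X : ℕ → Submodule ℝ E)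
    (hX : ∀ k, IsClosed (X k : Set E)) (hS : IsRSS X) :
    ∃ ε : ℝ, 0 < ε ∧ ∀ c : ℕ → ℕ, IsSequentialPartition c → ∀ φ : E →L[ℝ] ℝ,
      ENNReal.ofReal (ε * ‖φ‖) ≤ ∑' k : ℕ, ENNReal.ofReal (restrictedNorm X c k φ) := by
  obtain ⟨C, hC, hXC⟩ := hS.exists_hasBoundedRepresentations hX
  refine ⟨(2 * C)⁻¹, by positivity, fun c hc φ => ?_⟩
  by_cases htop : ∑' k, ENNReal.ofReal (restrictedNorm X c k φ) = ⊤
  · exact htop ▸ le_top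
  have hr : Summable fun k => restrictedNorm X c k φ := by
    simpa [ENNReal.toReal_ofReal (restrictedNorm_nonneg c _ φ)] using
      ENNReal.summable_toReal htop
  rw [← ENNReal.ofReal_tsum_of_nonneg (restrictedNorm_nonneg c · φ) hr, inv_mul_eq_div]
  exact ENNReal.ofReal_le_ofReal <|
    (div_le_iff₀' (by positivity)).2 (hXC.opNorm_le hC.le hc.1 φ hr)
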